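/- Let H = Σ_m E_m Π_m be a Hermitian matrix with Bohr frequencies Ω and jump operators A_α(ω) = Σ_{m,n : E_n − E_m = ω} Π_m A_α Π_n, let for each ω ∈ Ω the coefficient matrix (γ_{αβ}(ω))_{α,β} and (S_{αβ}(ω))_{α,β} be Hermitian N×N matrices, and define the Lamb-shift Hamiltonian H_LS = Σ_{ω∈Ω} Σ_{α,β} S_{αβ}(ω) A_α(ω)† A_β(ω) and the Lindblad dissipator ℒρ = Σ_{ω∈Ω} Σ_{α,β} γ_{αβ}(ω) (A_β(ω) ρ A_α(ω)† − ½{A_α(ω)† A_β(ω), ρ}). Then: (i) [H, H_LS] = 0; and (ii) for every matrix ρ, Tr(H(−i[H + H_LS, ρ] + ℒρ)) = −Σ_{ω∈Ω} ω Σ_{α,β} γ_{αβ}(ω) Tr(A_β(ω) ρ A_α(ω)†); i.e., the Lindblad energy dissipation rate is −d/dt Tr(Hρ_L) = Σ_ω ω Σ_{αβ} γ_{αβ}(ω) Tr(A_β(ω) ρ_L A_α(ω)†). -/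
import Mathlib


open Matrix

noncomputable section

/-- The jump operator `A(ω) = Σ_{m,n : E_n − E_m = ω} Π_m A Π_n`. -/
def jumpOp {n m : ℕ} (E : Fin m → ℝ) (P : Fin m → Matrix (Fin n) (Fin n) ℂ)
    (A : Matrix (Fin n) (Fin n) ℂ) (ω : ℝ) : Matrix (Fin n) (Fin n) ℂ :=
  ∑ i, ∑ j, if E j - E i = ω then P i * A * P j else 0

/-- The finite set of Bohr frequencies `Ω = {E_i − E_j}`. -/
def bohrSet {m : ℕ} (E : Fin m → ℝ) : Finset ℝ :=
  Finset.image (fun p : Fin m × Fin m => E p.1 - E p.2) Finset.univ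

/-- The Lamb-shift Hamiltonian `H_LS = Σ_{ω∈Ω} Σ_{α,β} S_{αβ}(ω) A_α(ω)† A_β(ω)`. -/
def lambShift {n m N : ℕ} (E : Fin m → ℝ) (P : Fin m → Matrix (Fin n) (Fin n) ℂ)
    (A : Fin N → Matrix (Fin n) (Fin n) ℂ) (S : ℝ → Matrix (Fin N) (Fin N) ℂ) :
    Matrix (Fin n) (Fin n) ℂ :=
  ∑ ω ∈ bohrSet E, ∑ α, ∑ β, S ω α β • ((jumpOp E P (A α) ω)ᴴ * jumpOp E P (A β) ω)

/-- The Lindblad dissipator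
`ℒρ = Σ_{ω∈Ω} Σ_{α,β} γ_{αβ}(ω)(A_β(ω) ρ A_α(ω)† − ½{A_α(ω)† A_β(ω), ρ})`. -/
def lindbladGKS {n m N : ℕ} (E : Fin m → ℝ) (P : Fin m → Matrix (Fin n) (Fin n) ℂ)
    (A : Fin N → Matrix (Fin n) (Fin n) ℂ) (γ : ℝ → Matrix (Fin N) (Fin N) ℂ)
    (ρ : Matrix (Fin n) (Fin n) ℂ) : Matrix (Fin n) (Fin n) ℂ :=
  ∑ ω ∈ bohrSet E, ∑ α, ∑ β, γ ω α β •
    (jumpOp E P (A β) ω * ρ * (jumpOp E P (A α) ω)ᴴ -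
      ((1 : ℂ) / 2) • ((jumpOp E P (A α) ω)ᴴ * jumpOp E P (A β) ω * ρ +
        ρ * ((jumpOp E P (A α) ω)ᴴ * jumpOp E P (A β) ω)))

section Aux

variable {n m : ℕ} (H : Matrix (Fin n) (Fin n) ℂ) (E : Fin m → ℝ)
  (P : Fin m → Matrix (Fin n) (Fin n) ℂ)

lemma HmulP (hOrth : ∀ j k, P j * P k = if j = k then P j else 0)
    (hH : H = ∑ j, (E j : ℂ) • P j) (i : Fin m) : H * P i = (E i : ℂ) • P i := by
  subst hH
  rw [Finset.sum_mul]
  simp [smul_mul_assoc, hOrth, apply_ite, Finset.sum_ite_eq']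

lemma PmulH (hOrth : ∀ j k, P j * P k = if j = k then P j else 0)
    (hH : H = ∑ j, (E j : ℂ) • P j) (i : Fin m) : P i * H = (E i : ℂ) • P i := by
  subst hH
  rw [Finset.mul_sum]
  simp [mul_smul_comm, hOrth, apply_ite, Finset.sum_ite_eq]

lemma jump_comm (hOrth : ∀ j k, P j * P k = if j = k then P j else 0)
    (hH : H = ∑ j, (E j : ℂ) • P j)
    (A : Matrix (Fin n) (Fin n) ℂ) (ω : ℝ) :
    H * jumpOp E P A ω = jumpOp E P A ω * H - (ω : ℂ) • jumpOp E P A ω := by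
  unfold jumpOp
  rw [Finset.mul_sum, Finset.sum_mul, Finset.smul_sum, ← Finset.sum_sub_distrib]
  refine Finset.sum_congr rfl fun i _ => ?_
  rw [Finset.mul_sum, Finset.sum_mul, Finset.smul_sum, ← Finset.sum_sub_distrib]
  refine Finset.sum_congr rfl fun j _ => ?_
  split_ifs with h
  · have h1 : H * (P i * A * P j) = (E i : ℂ) • (P i * A * P j) := by
      rw [show H * (P i * A * P j) = H * P i * A * P j by noncomm_ring,
        HmulP H E P hOrth hH, smul_mul_assoc, smul_mul_assoc]
    have h2 : P i * A * P j * H = (E j : ℂ) • (P i * A * P j) := by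
      rw [mul_assoc, PmulH H E P hOrth hH, mul_smul_comm]
    rw [h1, h2, ← sub_smul]
    congr 1
    have : E i = E j - ω := by linarith
    rw [this]; push_cast; ring
  · simp

lemma Hherm (hHerm : ∀ j, (P j)ᴴ = P j) (hH : H = ∑ j, (E j : ℂ) • P j) : Hᴴ = H := by
  subst hH
  rw [conjTranspose_sum]
  refine Finset.sum_congr rfl fun j _ => ?_
  rw [conjTranspose_smul, hHerm]
  norm_num

lemma adj_comm (A : Matrix (Fin n) (Fin n) ℂ) (ω : ℂ)
    (hA : H * A = A * H - ω • A) (hHerm : Hᴴ = H) (hω : star ω = ω) :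
    H * Aᴴ = Aᴴ * H + ω • Aᴴ := by
  have := congrArg conjTranspose hA
  simp only [conjTranspose_mul, conjTranspose_sub, conjTranspose_smul, hHerm, hω] at this
  rw [eq_sub_iff_add_eq] at this
  rw [← this]

lemma KB_comm (K B : Matrix (Fin n) (Fin n) ℂ) (ω : ℂ)
    (hK : H * K = K * H + ω • K) (hB : H * B = B * H - ω • B) :
    H * (K * B) = (K * B) * H := by
  calc H * (K * B) = (H * K) * B := (mul_assoc _ _ _).symm
    _ = K * (H * B) + ω • (K * B) := by rw [hK, add_mul, smul_mul_assoc, mul_assoc]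
    _ = K * (B * H) - ω • (K * B) + ω • (K * B) := by
        rw [hB, mul_sub, mul_smul_comm]
    _ = (K * B) * H := by rw [sub_add_cancel, mul_assoc]

lemma termId (K B ρ : Matrix (Fin n) (Fin n) ℂ) (ω : ℂ)
    (hK : H * K = K * H + ω • K) (hKB : H * (K * B) = (K * B) * H) :
    (H * (B * ρ * K - ((1 : ℂ)/2) • (K * B * ρ + ρ * (K * B)))).trace =
      -(ω * (B * ρ * K).trace) := by
  have hKH : K * H = H * K - ω • K := by rw [hK]; abel
  have e0 : (B * ρ * K).trace = (K * B * ρ).trace := by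
    rw [trace_mul_comm, mul_assoc]
  have e1 : (H * (B * ρ * K)).trace = (H * K * B * ρ).trace - ω * (K * B * ρ).trace := by
    rw [show H * (B * ρ * K) = (H * (B * ρ)) * K by simp [mul_assoc], trace_mul_comm,
      show K * (H * (B * ρ)) = (K * H) * (B * ρ) by simp [mul_assoc], hKH, sub_mul,
      smul_mul_assoc, trace_sub, trace_smul, smul_eq_mul]
    congr 2 <;> simp [mul_assoc]
  have e2 : (H * (K * B * ρ)).trace = (H * K * B * ρ).trace := by simp [mul_assoc]
  have e3 : (H * (ρ * (K * B))).trace = (H * K * B * ρ).trace := by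
    rw [show H * (ρ * (K * B)) = (H * ρ) * (K * B) by rw [mul_assoc], trace_mul_comm,
      show (K * B) * (H * ρ) = ((K * B) * H) * ρ by simp [mul_assoc], ← hKB]
    simp [mul_assoc]
  rw [mul_sub, mul_smul_comm, mul_add, trace_sub, trace_smul, trace_add, e1, e2, e3, e0,
    smul_eq_mul]
  ring

end Aux

/-- (i) The Lamb-shift Hamiltonian commutes with `H`; (ii) the Lindblad
energy dissipation rate is
`Tr(H(−i[H+H_LS,ρ] + ℒρ)) = −Σ_{ω∈Ω} ω Σ_{α,β} γ_{αβ}(ω) Tr(A_β(ω) ρ A_α(ω)†)`. -/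
theorem lindblad_energy_dissipation_rate
    {n m N : ℕ} (H : Matrix (Fin n) (Fin n) ℂ)
    (E : Fin m → ℝ) (P : Fin m → Matrix (Fin n) (Fin n) ℂ)
    (hE : Function.Injective E)
    (hHerm : ∀ j, (P j)ᴴ = P j)
    (hOrth : ∀ j k, P j * P k = if j = k then P j else 0)
    (hSum : ∑ j, P j = 1)
    (hH : H = ∑ j, (E j : ℂ) • P j)
    (A : Fin N → Matrix (Fin n) (Fin n) ℂ)
    (γ S : ℝ → Matrix (Fin N) (Fin N) ℂ)
    (hγ : ∀ ω, (γ ω).IsHermitian) (hS : ∀ ω, (S ω).IsHermitian) :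
    H * lambShift E P A S = lambShift E P A S * H ∧
      ∀ ρ : Matrix (Fin n) (Fin n) ℂ,
        (H * ((-Complex.I) • ((H + lambShift E P A S) * ρ - ρ * (H + lambShift E P A S)) +
            lindbladGKS E P A γ ρ)).trace =
          -∑ ω ∈ bohrSet E, (ω : ℂ) * ∑ α, ∑ β, γ ω α β *
            (jumpOp E P (A β) ω * ρ * (jumpOp E P (A α) ω)ᴴ).trace := by
  have hHH : Hᴴ = H := Hherm H E P hHerm hH
  have hB : ∀ (X : Matrix (Fin n) (Fin n) ℂ) (ω : ℝ),
      H * jumpOp E P X ω = jumpOp E P X ω * H - (ω : ℂ) • jumpOp E P X ω :=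
    jump_comm H E P hOrth hH
  have hK : ∀ (X : Matrix (Fin n) (Fin n) ℂ) (ω : ℝ),
      H * (jumpOp E P X ω)ᴴ = (jumpOp E P X ω)ᴴ * H + (ω : ℂ) • (jumpOp E P X ω)ᴴ :=
    fun X ω => adj_comm H _ _ (hB X ω) hHH (by simp)
  have hKB : ∀ (α β : Fin N) (ω : ℝ),
      H * ((jumpOp E P (A α) ω)ᴴ * jumpOp E P (A β) ω) =
        ((jumpOp E P (A α) ω)ᴴ * jumpOp E P (A β) ω) * H :=
    fun α β ω => KB_comm H _ _ _ (hK (A α) ω) (hB (A β) ω)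
  have hL : H * lambShift E P A S = lambShift E P A S * H := by
    refine (Commute.sum_right _ _ _ fun ω _ => ?_)
    refine (Commute.sum_right _ _ _ fun α _ => ?_)
    refine (Commute.sum_right _ _ _ fun β _ => ?_)
    exact (Commute.smul_right (hKB α β ω) _)
  refine ⟨hL, fun ρ => ?_⟩
  set L := lambShift E P A S with hLdef
  have hX : H * (H + L) = (H + L) * H := by rw [mul_add, add_mul, hL]
  rw [mul_add, trace_add]
  have h1 : (H * ((-Complex.I) • ((H + L) * ρ - ρ * (H + L)))).trace = 0 := by
    rw [mul_smul_comm, trace_smul, mul_sub, trace_sub,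
      show H * ((H + L) * ρ) = (H * (H + L)) * ρ by rw [mul_assoc],
      show H * (ρ * (H + L)) = (H * ρ) * (H + L) by rw [mul_assoc],
      trace_mul_comm (H * ρ), show (H + L) * (H * ρ) = ((H + L) * H) * ρ by rw [mul_assoc],
      ← hX]
    simp
  rw [h1, zero_add]
  unfold lindbladGKS
  rw [Finset.mul_sum, trace_sum, ← Finset.sum_neg_distrib]
  refine Finset.sum_congr rfl fun ω _ => ?_
  have step : ∀ α : Fin N, (H * ∑ β, γ ω α β •
      (jumpOp E P (A β) ω * ρ * (jumpOp E P (A α) ω)ᴴ -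
        ((1 : ℂ) / 2) • ((jumpOp E P (A α) ω)ᴴ * jumpOp E P (A β) ω * ρ +
          ρ * ((jumpOp E P (A α) ω)ᴴ * jumpOp E P (A β) ω)))).trace =
      ∑ β, -((ω : ℂ) * (γ ω α β *
        (jumpOp E P (A β) ω * ρ * (jumpOp E P (A α) ω)ᴴ).trace)) := by
    intro α
    rw [Finset.mul_sum, trace_sum]
    refine Finset.sum_congr rfl fun β _ => ?_
    rw [mul_smul_comm, trace_smul, smul_eq_mul,
      termId H _ _ ρ ((ω : ℂ)) (hK (A α) ω) (hKB α β ω)]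
    ring
  rw [Finset.mul_sum, trace_sum]
  simp only [step]
  simp [Finset.mul_sum]
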